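/- Let I ⊂ ℝ be a bounded interval and let L ⊂ ℝ be a measurable set of positive Lebesgue measure. Then the operator g ↦ χ_I · F⁻¹(χ_L · F g) is injective on L²(I): if g ∈ L²(I) and χ_I F⁻¹(χ_L F g) = 0 in L²(I), then g = 0. -/

import Mathlib

open MeasureTheory Set Filter Topology ComplexConjugate
open scoped ENNReal

noncomputable section

/-- The restriction of Lebesgue measure to a set `S ⊆ ℝ`; we regard `L²(S)` as
`Lp ℂ 2 (mu S)`, identified with the subspace of `L²(ℝ)` of functions supported in `S`. -/
def mu (S : Set ℝ) : Measure ℝ := volume.restrict S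

/-- `coeff S g x = ∫_S g(τ) e^{-i x τ} dτ`, i.e. `√(2π)` times the Fourier transform
`F g (x) = (2π)^{-1/2} ∫ g(ξ) e^{-iξx} dξ` of `g` regarded as a function supported in `S`. -/
def coeff (S : Set ℝ) (g : ℝ → ℂ) (x : ℝ) : ℂ :=
  ∫ τ in S, g τ * Complex.exp (-(Complex.I * x * τ))

/-- The set `L = ⋃_{n∈K} ((−log(n+1), −log n] ∪ [log n, log(n+1)))`. -/
def Lset (K : Set ℕ) : Set ℝ :=
  ⋃ n ∈ K, (Ioc (-Real.log (n + 1)) (-Real.log n) ∪ Ico (Real.log n) (Real.log (n + 1)))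

/-- Counting function `π_K(x) = #{n ∈ K : n ≤ x}`, as a real number. -/
def countK (K : Set ℕ) (x : ℝ) : ℝ := ((K ∩ {n : ℕ | (n : ℝ) ≤ x}).ncard : ℝ)

/-- Defining (weak) property of the operator `𝒵_{K,I}` on `L²(S)`: tested against any
`φ ∈ L²(S)` it is given by
`⟨Z g, φ⟩ = (1/2π) Σ_{n∈K} (1/n) [(∫_S g(τ) n^{-iτ} dτ) conj(∫_S φ(τ) n^{-iτ} dτ)
  + (∫_S g(τ) n^{iτ} dτ) conj(∫_S φ(τ) n^{iτ} dτ)]`,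
which is the weak form of `(Z g)(t) = (1/2π) Σ_{n∈K} (1/n) [(∫_S g(τ) n^{-iτ} dτ) n^{it}
  + (∫_S g(τ) n^{iτ} dτ) n^{-it}]` for `t ∈ S`. -/
def IsZetaOp (K : Set ℕ) (S : Set ℝ)
    (Z : Lp ℂ 2 (mu S) →L[ℂ] Lp ℂ 2 (mu S)) : Prop :=
  ∀ g φ : Lp ℂ 2 (mu S),
    (∫ t in S, (Z g) t * conj (φ t))
      = (1 / (2 * (Real.pi : ℂ))) *
        ∑' n : K, (1 / ((n : ℕ) : ℂ)) *
          (coeff S g (Real.log ((n : ℕ) : ℝ)) * conj (coeff S φ (Real.log ((n : ℕ) : ℝ)))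
            + coeff S g (-Real.log ((n : ℕ) : ℝ)) * conj (coeff S φ (-Real.log ((n : ℕ) : ℝ))))

/-- Defining (weak) property of the operator `g ↦ χ_S ⬝ F⁻¹(χ_L ⬝ F g)` on `L²(S)`:
tested against any `φ ∈ L²(S)` it satisfies `⟨M g, φ⟩ = ∫_L (F g)(ξ) conj((F φ)(ξ)) dξ`,
where `F` is the Fourier transform `F g (ξ) = (2π)^{-1/2} ∫ g(τ) e^{-iξτ} dτ`. -/
def IsMultOp (L : Set ℝ) (S : Set ℝ)
    (M : Lp ℂ 2 (mu S) →L[ℂ] Lp ℂ 2 (mu S)) : Prop :=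
  ∀ g φ : Lp ℂ 2 (mu S),
    (∫ t in S, (M g) t * conj (φ t))
      = (1 / (2 * (Real.pi : ℂ))) * ∫ ξ in L, coeff S g ξ * conj (coeff S φ ξ)

/-- A map between normed spaces is bounded below in norm. -/
def BddBelowOp {E F : Type*} [NormedAddCommGroup E] [NormedAddCommGroup F]
    (Z : E → F) : Prop :=
  ∃ c : ℝ, 0 < c ∧ ∀ g : E, c * ‖g‖ ≤ ‖Z g‖

/-- The multiplicative semigroup of positive integers generated by a set `P` of primes:
the positive integers all of whose prime factors lie in `P` (including `1`). -/
def genBy (P : Set ℕ) : Set ℕ := {n : ℕ | 0 < n ∧ ∀ p : ℕ, p.Prime → p ∣ n → p ∈ P}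

/-- The primes not belonging to `Q`. -/
def primesNotIn (Q : Set ℕ) : Set ℕ := {p : ℕ | p.Prime ∧ p ∉ Q}

/-- `ζ_J(1 + it) = Σ_{n ∈ J} n^{-1-it}` on the abscissa `Re s = 1`. -/
def zetaLine (J : Set ℕ) (t : ℝ) : ℂ := ∑' n : J, ((n : ℕ) : ℂ) ^ (-(1 + Complex.I * t))

/-!
Write `ĝ = coeff (Ioo a b) g`. Testing `M g = 0` against `g` itself gives `∫_L |ĝ|² = 0`.
By Parseval on `(a, b)`, the periodizations of `|ĝ|²` with period `2π / (b - a)` are constant,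
so `|ĝ|²` is integrable and `ĝ` vanishes a.e. on `L`. Since `(a, b)` is bounded, `ĝ` extends to
an entire function, so it cannot vanish on a set of positive measure unless `ĝ ≡ 0`; then all
Fourier coefficients of `g` on `(a, b)` vanish, and `g = 0` by Parseval once more.
-/

section

open Complex

theorem lintegral_eq_setLIntegral_Ioc_tsum_add_mul {T : ℝ} (hT : 0 < T) {φ : ℝ → ℝ≥0∞}
    (hφ : Measurable φ) :
    ∫⁻ x, φ x = ∫⁻ s in Ioc 0 T, ∑' n : ℤ, φ (s + n * T) := by
  rw [lintegral_tsum (f := fun (n : ℤ) s => φ (s + n * T))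
      fun n => (hφ.comp (measurable_add_const _)).aemeasurable,
    ← setLIntegral_univ, ← iUnion_Ioc_add_zsmul hT 0,
    lintegral_iUnion (fun n => measurableSet_Ioc) (pairwise_disjoint_Ioc_add_zsmul 0 T)]
  refine tsum_congr fun n => ?_
  have hpre : (· + n * T) ⁻¹' Ioc (0 + n • T) (0 + (n + 1) • T) = Ioc 0 T := by
    simp [preimage_add_const_Ioc, zsmul_eq_mul, add_mul]
  rw [← hpre]
  exact ((measurePreserving_add_right volume _).setLIntegral_comp_preimage
    measurableSet_Ioc hφ).symm

theorem AnalyticOnNhd.eq_zero_of_ae_restrict_eq_zero {E : Type*} [NormedAddCommGroup E]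
    [NormedSpace ℝ E] {f : ℝ → E} (hf : AnalyticOnNhd ℝ f univ) {μ : Measure ℝ}
    [NullSingletonClass μ] {L : Set ℝ} (hL : μ L ≠ 0) (hfL : ∀ᵐ x ∂μ.restrict L, f x = 0) :
    f = 0 := by
  by_contra hf0
  obtain ⟨x, hx⟩ := Function.ne_iff.1 hf0
  -- the zeros of a nonzero analytic function are discrete, hence countable, hence null
  have hne : ∀ᵐ y ∂μ, f y ≠ 0 := by
    have h := ae_restrict_le_codiscreteWithin (μ := μ) MeasurableSet.univ
      (hf.preimage_zero_mem_codiscrete hx)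
    rwa [Measure.restrict_univ] at h
  have hfalse : ∀ᵐ y ∂μ.restrict L, False := by
    filter_upwards [hfL, ae_restrict_of_ae hne] with y h0 hne using hne h0
  exact hL (Measure.restrict_eq_zero.1 (ae_eq_bot.1 (eventually_false_iff_eq_bot.1 hfalse)))

theorem norm_cexp_neg_I_mul_le {R τ : ℝ} (hτ : |τ| ≤ R) (z : ℂ) :
    ‖cexp (-(I * z * τ))‖ ≤ Real.exp (R * ‖z‖) := by
  rw [norm_exp, Real.exp_le_exp]
  calc (-(I * z * τ)).re = z.im * τ := by simp
    _ ≤ R * ‖z‖ := by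
      nlinarith [abs_le.1 hτ, norm_nonneg z, abs_nonneg τ, abs_le.1 (abs_im_le_norm z)]

theorem differentiable_integral_mul_cexp_neg_I_mul {μ : Measure ℝ} {R : ℝ}
    (hμ : ∀ᵐ τ ∂μ, |τ| ≤ R) {f : ℝ → ℂ} (hf : Integrable f μ) :
    Differentiable ℂ fun z : ℂ => ∫ τ, f τ * cexp (-(I * z * τ)) ∂μ := by
  intro z₀
  have hmeas : ∀ z : ℂ, AEStronglyMeasurable (fun τ : ℝ => f τ * cexp (-(I * z * τ))) μ :=
    fun z => hf.aestronglyMeasurable.mul (by fun_prop : Continuous _).aestronglyMeasurable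
  have hint : Integrable (fun τ : ℝ => f τ * cexp (-(I * z₀ * τ))) μ := by
    refine (hf.norm.mul_const (Real.exp (R * ‖z₀‖))).mono' (hmeas z₀) ?_
    filter_upwards [hμ] with τ hτ
    rw [norm_mul]
    exact mul_le_mul_of_nonneg_left (norm_cexp_neg_I_mul_le hτ z₀) (norm_nonneg _)
  have hmeas' : AEStronglyMeasurable (fun τ : ℝ => f τ * (-(I * τ)) * cexp (-(I * z₀ * τ))) μ :=
    (hf.aestronglyMeasurable.mul (by fun_prop : Continuous _).aestronglyMeasurable).mul
      (by fun_prop : Continuous _).aestronglyMeasurable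
  refine (hasDerivAt_integral_of_dominated_loc_of_deriv_le
    (F' := fun z τ => f τ * (-(I * τ)) * cexp (-(I * z * τ)))
    (bound := fun τ => ‖f τ‖ * (R * Real.exp (R * (‖z₀‖ + 1))))
    (Metric.ball_mem_nhds z₀ one_pos) (.of_forall hmeas) hint hmeas' ?_
    (hf.norm.mul_const _) ?_).2.differentiableAt
  · filter_upwards [hμ] with τ hτ z hz
    have hz : ‖z‖ ≤ ‖z₀‖ + 1 := by
      rw [Metric.mem_ball, dist_eq_norm] at hz
      linarith [norm_le_norm_add_norm_sub' z z₀]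
    have hR : 0 ≤ R := (abs_nonneg τ).trans hτ
    rw [norm_mul, norm_mul, mul_assoc]
    gcongr
    · simpa using hτ
    · exact (norm_cexp_neg_I_mul_le hτ z).trans (Real.exp_le_exp.2 (by gcongr))
  · refine .of_forall fun τ z _ => ?_
    have hlin : HasDerivAt (fun w : ℂ => -(I * w * τ)) (-(I * τ)) z := by
      simpa using (((hasDerivAt_id z).const_mul I).mul_const (τ : ℂ)).fun_neg
    exact (hlin.cexp.const_mul (f τ)).congr_deriv (by ring)

theorem analyticOnNhd_coeff {S : Set ℝ} (hS : MeasurableSet S) (hSb : Bornology.IsBounded S)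
    {f : ℝ → ℂ} (hf : IntegrableOn f S) : AnalyticOnNhd ℝ (coeff S f) univ := by
  obtain ⟨R, hR⟩ := hSb.subset_closedBall 0
  have hμ : ∀ᵐ τ ∂volume.restrict S, |τ| ≤ R :=
    ae_restrict_of_forall_mem hS fun τ hτ => by simpa using hR hτ
  have hC := analyticOnNhd_univ_iff_differentiable.2
    (differentiable_integral_mul_cexp_neg_I_mul hμ hf)
  exact (hC.restrictScalars (𝕜 := ℝ)).comp (ofRealCLM.analyticOnNhd univ)
    (mapsTo_univ _ _)

theorem coeff_Ioo_add_mul_eq_mul_fourierCoeffOn {a b : ℝ} (hab : a < b) (f : ℝ → ℂ) (s : ℝ)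
    (n : ℤ) :
    coeff (Ioo a b) f (s + n * (2 * Real.pi / (b - a))) =
      (b - a) * fourierCoeffOn hab (fun τ => f τ * cexp (-(I * s * τ))) n := by
  have hba : (b : ℂ) - a ≠ 0 := sub_ne_zero.2 (by exact_mod_cast hab.ne')
  have hscal : ((b : ℂ) - a) * ((1 / (b - a) : ℝ) : ℂ) = 1 := by push_cast; field_simp
  rw [fourierCoeffOn_eq_integral, intervalIntegral.integral_of_le hab.le, real_smul,
    ← mul_assoc, hscal, one_mul, coeff, Measure.restrict_congr_set Ioo_ae_eq_Ioc]
  refine setIntegral_congr_fun measurableSet_Ioc fun τ _ => ?_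
  rw [fourier_coe_apply, smul_eq_mul, mul_left_comm, ← exp_add]
  congr 2
  push_cast
  field_simp
  ring

theorem hasSum_norm_sq_coeff_Ioo {a b : ℝ} (hab : a < b) {f : ℝ → ℂ}
    (hf : MemLp f 2 (volume.restrict (Ioo a b))) (s : ℝ) :
    HasSum (fun n : ℤ => ‖coeff (Ioo a b) f (s + n * (2 * Real.pi / (b - a)))‖ ^ 2)
      ((b - a) * ∫ τ in Ioo a b, ‖f τ‖ ^ 2) := by
  set fs : ℝ → ℂ := fun τ => f τ * cexp (-(I * s * τ))
  have hnorm : ∀ τ, ‖fs τ‖ = ‖f τ‖ := fun τ => by simp [fs, norm_exp]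
  have hIoc : volume.restrict (Ioo a b) = volume.restrict (Ioc a b) :=
    Measure.restrict_congr_set Ioo_ae_eq_Ioc
  have hfs : MemLp fs 2 (volume.restrict (Ioc a b)) := by
    rw [← hIoc]
    exact hf.of_le (hf.aestronglyMeasurable.mul (by fun_prop : Continuous _).aestronglyMeasurable)
      (.of_forall fun τ => (hnorm τ).le)
  have hval : (b - a) ^ 2 * (b - a)⁻¹ • ∫ τ in a..b, ‖fs τ‖ ^ 2
      = (b - a) * ∫ τ in Ioo a b, ‖f τ‖ ^ 2 := by
    rw [intervalIntegral.integral_of_le hab.le, ← hIoc, smul_eq_mul]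
    simp_rw [hnorm]
    field_simp [(sub_pos.2 hab).ne']
  rw [← hval]
  refine ((hasSum_sq_fourierCoeffOn hab hfs).mul_left _).congr_fun fun n => ?_
  rw [coeff_Ioo_add_mul_eq_mul_fourierCoeffOn hab, norm_mul, mul_pow, ← ofReal_sub, norm_real,
    Real.norm_eq_abs, sq_abs]

theorem integrable_norm_sq_coeff_Ioo {a b : ℝ} (hab : a < b) {f : ℝ → ℂ}
    (hf : MemLp f 2 (volume.restrict (Ioo a b))) :
    Integrable fun ξ => ‖coeff (Ioo a b) f ξ‖ ^ 2 := by
  have hc : Continuous (coeff (Ioo a b) f) :=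
    (analyticOnNhd_coeff measurableSet_Ioo (Metric.isBounded_Ioo a b)
      (hf.integrable one_le_two)).continuous
  have hT : 0 < 2 * Real.pi / (b - a) := div_pos Real.two_pi_pos (sub_pos.2 hab)
  refine ⟨(hc.norm.pow 2).aestronglyMeasurable,
    (hasFiniteIntegral_iff_ofReal (.of_forall fun ξ => by positivity)).2 ?_⟩
  have hmeas : Measurable fun ξ => ENNReal.ofReal (‖coeff (Ioo a b) f ξ‖ ^ 2) :=
    (hc.norm.pow 2).measurable.ennreal_ofReal
  rw [lintegral_eq_setLIntegral_Ioc_tsum_add_mul hT hmeas]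
  have htranslates : ∀ s, ∑' n : ℤ, ENNReal.ofReal
      (‖coeff (Ioo a b) f (s + n * (2 * Real.pi / (b - a)))‖ ^ 2)
      = ENNReal.ofReal ((b - a) * ∫ τ in Ioo a b, ‖f τ‖ ^ 2) := fun s => by
    have h := hasSum_norm_sq_coeff_Ioo hab hf s
    rw [← ENNReal.ofReal_tsum_of_nonneg (fun n => by positivity) h.summable, h.tsum_eq]
  simp_rw [htranslates]
  simp [ENNReal.mul_lt_top]

theorem ae_eq_zero_of_coeff_Ioo_eq_zero {a b : ℝ} (hab : a < b) {f : ℝ → ℂ}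
    (hf : MemLp f 2 (volume.restrict (Ioo a b)))
    (h : ∀ n : ℤ, coeff (Ioo a b) f (n * (2 * Real.pi / (b - a))) = 0) :
    f =ᵐ[volume.restrict (Ioo a b)] 0 := by
  have hsum := hasSum_norm_sq_coeff_Ioo hab hf 0
  simp only [zero_add, h, norm_zero, ne_eq, OfNat.ofNat_ne_zero, not_false_eq_true,
    zero_pow] at hsum
  have hI : ∫ τ in Ioo a b, ‖f τ‖ ^ 2 = 0 :=
    (mul_eq_zero.1 (hasSum_zero.unique hsum).symm).resolve_left (sub_pos.2 hab).ne'
  filter_upwards [(integral_eq_zero_iff_of_nonneg (fun τ => by positivity)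
    ((memLp_two_iff_integrable_sq_norm hf.aestronglyMeasurable).1 hf)).1 hI] with τ hτ
  simpa using hτ

theorem IsMultOp.ae_coeff_eq_zero_of_apply_eq_zero {L S : Set ℝ}
    {M : Lp ℂ 2 (mu S) →L[ℂ] Lp ℂ 2 (mu S)} (hM : IsMultOp L S M) {g : Lp ℂ 2 (mu S)}
    (hg : M g = 0) (hint : IntegrableOn (fun ξ => ‖coeff S g ξ‖ ^ 2) L) :
    ∀ᵐ ξ ∂volume.restrict L, coeff S g ξ = 0 := by
  have hMg : ∫ t in S, (M g) t * conj (g t) = 0 := by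
    rw [hg]
    refine integral_eq_zero_of_ae ?_
    filter_upwards [Lp.coeFn_zero ℂ 2 (mu S)] with t ht
    rw [ht, Pi.zero_apply, zero_mul]
  have hL : ∫ ξ in L, ‖coeff S g ξ‖ ^ 2 = 0 := by
    have h2π : (1 / (2 * (Real.pi : ℂ))) ≠ 0 := by simp [Real.pi_ne_zero]
    rw [hM, mul_eq_zero, or_iff_right h2π] at hMg
    simp_rw [mul_conj', ← ofReal_pow, integral_complex_ofReal] at hMg
    exact_mod_cast hMg
  filter_upwards [(integral_eq_zero_iff_of_nonneg (fun ξ => by positivity) hint).1 hL]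
    with ξ hξ
  simpa using hξ

end

theorem statement6_general (a b : ℝ) (hab : a < b) (L : Set ℝ)
    (hLpos : 0 < volume L)
    (M : Lp ℂ 2 (mu (Ioo a b)) →L[ℂ] Lp ℂ 2 (mu (Ioo a b)))
    (hM : IsMultOp L (Ioo a b) M) :
    ∀ g : Lp ℂ 2 (mu (Ioo a b)), M g = 0 → g = 0 := by
  intro g hg
  have hg2 : MemLp g 2 (volume.restrict (Ioo a b)) := Lp.memLp g
  have hcoeff : coeff (Ioo a b) g = 0 :=
    (analyticOnNhd_coeff measurableSet_Ioo (Metric.isBounded_Ioo a b)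
      (hg2.integrable one_le_two)).eq_zero_of_ae_restrict_eq_zero hLpos.ne'
      (hM.ae_coeff_eq_zero_of_apply_eq_zero hg (integrable_norm_sq_coeff_Ioo hab hg2).integrableOn)
  exact Lp.eq_zero_iff_ae_eq_zero.2
    (ae_eq_zero_of_coeff_Ioo_eq_zero hab hg2 fun n => congrFun hcoeff _)

/-- For a bounded interval `I = (a,b)` and a measurable set `L` of positive
Lebesgue measure, the operator `g ↦ χ_I F⁻¹(χ_L F g)` is injective on `L²(I)`. -/
theorem statement6 (a b : ℝ) (hab : a < b) (L : Set ℝ) (hL : MeasurableSet L)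
    (hLpos : 0 < volume L)
    (M : Lp ℂ 2 (mu (Ioo a b)) →L[ℂ] Lp ℂ 2 (mu (Ioo a b)))
    (hM : IsMultOp L (Ioo a b) M) :
    ∀ g : Lp ℂ 2 (mu (Ioo a b)), M g = 0 → g = 0 :=
  statement6_general a b hab L hLpos M hM

end
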